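/- Let A = (a_{ij}) ∈ GL_N(ℤ_p) be any (deterministic) matrix, let λ, μ be weakly decreasing N-tuples with entries in ℤ_{≥0} ∪ {∞}, let ν := SN(diag(p^λ)·A·diag(p^μ)), fix 1 ≤ r ≤ N, and for r ≤ j ≤ N let v_j := (a_{ij} mod p)_{ℓ(λ) < i ≤ N} ∈ 𝔽_p^{N−ℓ(λ)}. Then: (1) if the set {v_j : r ≤ j ≤ N} is linearly independent over 𝔽_p, then ν_j = μ_j for all r ≤ j ≤ N; (2) if moreover μ_{r−1} > μ_r (with μ_0 := ∞), then conversely ν_j = μ_j for all r ≤ j ≤ N implies that {v_j : r ≤ j ≤ N} is linearly independent over 𝔽_p. -/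

import Mathlib

/-!
`minorNorm B k`, the largest norm of a `k × k` minor of `B`, is invariant under `GL_N(ℤ_p)` on
both sides. So for `B = diag(p^λ) A diag(p^μ)` with singular numbers `ν` it is the product of
the `k` largest norms `‖p^{ν_j}‖`, those with `j > N - k`. On the other hand a minor of `B` is
`∏ ‖p^{λ_{s_i}}‖ · ‖det A_{s,t}‖ · ∏ ‖p^{μ_{t_i}}‖`, which never exceeds the same tail product
for `μ`. If the `v_j` are independent mod `p`, rows with `λ_i = 0` can be chosen so that the
minor of `A` on the last `k ≤ N - r + 1` columns is a unit. Then the tail products of `ν` and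
`μ` agree, and dividing consecutive ones gives `ν_j = μ_j`. Conversely, if the `v_j` are
dependent and `μ` drops at `r`, every `(N - r + 1)`-minor falls strictly short of the bound.
It either uses a column before `r`, or uses a row with `λ_i ≥ 1`, or is a minor of `A` that
vanishes mod `p`.
-/

noncomputable section

/-- `p^a ∈ ℤ_p` for `a ∈ ℕ ∪ {∞}`, with the convention `p^∞ = 0`. -/
def zppow (p : ℕ) [Fact p.Prime] (a : WithTop ℕ) : ℤ_[p] :=
  if h : a = ⊤ then 0 else (p : ℤ_[p]) ^ (a.untop h)

/-- The diagonal matrix `diag(p^{s₁},…,p^{s_N})` over `ℤ_p`. -/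
def snDiag (p : ℕ) [Fact p.Prime] (N : ℕ) (s : Fin N → WithTop ℕ) :
    Matrix (Fin N) (Fin N) ℤ_[p] :=
  Matrix.diagonal fun i => zppow p (s i)

/-- `s` is the (weakly decreasing) tuple of singular numbers of `A ∈ Mat_N(ℤ_p)`. -/
def IsSN (p : ℕ) [Fact p.Prime] (N : ℕ) (A : Matrix (Fin N) (Fin N) ℤ_[p])
    (s : Fin N → WithTop ℕ) : Prop :=
  Antitone s ∧ ∃ U V : (Matrix (Fin N) (Fin N) ℤ_[p])ˣ, A = U.val * snDiag p N s * V.val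

open Finset
open scoped NNReal

section PowerNorms

variable {p : ℕ} [Fact p.Prime]

lemma zppow_coe (n : ℕ) : zppow p (WithTop.some n) = (p : ℤ_[p]) ^ n := by
  rw [zppow, dif_neg WithTop.coe_ne_top]
  rfl

lemma zppow_zero : zppow p 0 = 1 := by
  simpa using zppow_coe (p := p) 0

lemma nnnorm_zppow_top : ‖zppow p ⊤‖₊ = 0 := by
  simp [zppow]

lemma strictAnti_nnnorm_zppow : StrictAnti fun a : WithTop ℕ => ‖zppow p a‖₊ := by
  have hp0 : 0 < ‖(p : ℤ_[p])‖₊ := by simpa using (Fact.out : p.Prime).ne_zero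
  have hp1 : ‖(p : ℤ_[p])‖₊ < 1 := by
    rw [← NNReal.coe_lt_coe, coe_nnnorm, PadicInt.norm_p]
    exact inv_lt_one_of_one_lt₀ (by exact_mod_cast (Fact.out : p.Prime).one_lt)
  intro a b hab
  lift a to ℕ using hab.ne_top
  induction b with
  | top =>
    dsimp only
    rw [nnnorm_zppow_top, zppow_coe, nnnorm_pow]
    exact pow_pos hp0 a
  | coe b =>
    dsimp only
    rw [zppow_coe, zppow_coe, nnnorm_pow, nnnorm_pow]
    exact pow_lt_pow_right_of_lt_one₀ hp0 hp1 (by exact_mod_cast hab)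

lemma antitone_nnnorm_zppow : Antitone fun a : WithTop ℕ => ‖zppow p a‖₊ :=
  strictAnti_nnnorm_zppow.antitone

lemma nnnorm_zppow_le_one (a : WithTop ℕ) : ‖zppow p a‖₊ ≤ 1 := by
  simpa [zppow_zero] using antitone_nnnorm_zppow (p := p) (zero_le : 0 ≤ a)

lemma nnnorm_zppow_lt_one_iff {a : WithTop ℕ} : ‖zppow p a‖₊ < 1 ↔ a ≠ 0 := by
  simpa [zppow_zero, pos_iff_ne_zero] using
    (strictAnti_nnnorm_zppow (p := p)).lt_iff_gt (a := a) (b := 0)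

lemma nnnorm_zppow_pos_iff {a : WithTop ℕ} : 0 < ‖zppow p a‖₊ ↔ a ≠ ⊤ := by
  rw [← nnnorm_zppow_top (p := p), strictAnti_nnnorm_zppow.lt_iff_gt, lt_top_iff_ne_top]

lemma PadicInt.nnnorm_le_one (x : ℤ_[p]) : ‖x‖₊ ≤ 1 := by
  simpa [← NNReal.coe_le_coe] using PadicInt.norm_le_one x

lemma PadicInt.nnnorm_lt_one_iff_toZMod_eq_zero (x : ℤ_[p]) :
    ‖x‖₊ < 1 ↔ PadicInt.toZMod x = 0 := by
  rw [← NNReal.coe_lt_coe, coe_nnnorm, NNReal.coe_one, ← PadicInt.mem_nonunits,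
    ← IsLocalRing.mem_maximalIdeal, ← PadicInt.ker_toZMod, RingHom.mem_ker]

end PowerNorms

lemma Matrix.det_submatrix_mul_eq_sum {R : Type*} [CommRing R] {α β γ : Type*} [Fintype β]
    {k : ℕ} (M : Matrix α β R) (B : Matrix β γ R) (s : Fin k → α) (t : Fin k → γ) :
    ((M * B).submatrix s t).det
      = ∑ g : Fin k → β, (∏ i, M (s i) (g i)) * (B.submatrix g t).det := by
  have hrows : ((M * B).submatrix s t : Fin k → Fin k → R) =
      fun i => ∑ l, M (s i) l • fun j => B l (t j) := by
    ext i j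
    simp [Matrix.mul_apply]
  change Matrix.detRowAlternating.toMultilinearMap _ = _
  rw [hrows, MultilinearMap.map_sum]
  refine sum_congr rfl fun g _ => ?_
  rw [MultilinearMap.map_smul_univ, smul_eq_mul]
  rfl

lemma Matrix.det_submatrix_eq_zero_of_not_injective {R : Type*} [CommRing R] {α β : Type*}
    {k : ℕ} (B : Matrix α β R) (s : Fin k → α) {t : Fin k → β}
    (ht : ¬ Function.Injective t) :
    (B.submatrix s t).det = 0 := by
  obtain ⟨a, b, hab, hne⟩ := Function.not_injective_iff.mp ht
  exact Matrix.det_zero_of_column_eq hne fun i => by simp [hab]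

section MinorNorm

open Matrix

variable {p : ℕ} [Fact p.Prime] {l m n : Type*} [Fintype l] [Fintype m] [Fintype n]

/-- The `p`-adic counterpart of the gcd of the `k × k` minors. -/
def minorNorm (B : Matrix m n ℤ_[p]) (k : ℕ) : ℝ≥0 :=
  univ.sup fun st : (Fin k → m) × (Fin k → n) => ‖(B.submatrix st.1 st.2).det‖₊

variable {k : ℕ} {c : ℝ≥0}

lemma nnnorm_det_submatrix_le_minorNorm (B : Matrix m n ℤ_[p]) (s : Fin k → m)
    (t : Fin k → n) : ‖(B.submatrix s t).det‖₊ ≤ minorNorm B k := by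
  unfold minorNorm
  have := le_sup (α := ℝ≥0) (f := fun st : (Fin k → m) × (Fin k → n) =>
    ‖(B.submatrix st.1 st.2).det‖₊) (mem_univ (s, t))
  simpa using this

lemma minorNorm_le (B : Matrix m n ℤ_[p])
    (h : ∀ (s : Fin k → m) (t : Fin k → n), ‖(B.submatrix s t).det‖₊ ≤ c) :
    minorNorm B k ≤ c :=
  Finset.sup_le fun st _ => h st.1 st.2

lemma minorNorm_le_of_injective (B : Matrix m n ℤ_[p])
    (h : ∀ (s : Fin k → m) (t : Fin k → n), Function.Injective t →
      ‖(B.submatrix s t).det‖₊ ≤ c) :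
    minorNorm B k ≤ c := by
  refine minorNorm_le B fun s t => ?_
  by_cases ht : Function.Injective t
  · exact h s t ht
  · simp [Matrix.det_submatrix_eq_zero_of_not_injective B s ht]

lemma minorNorm_lt_of_injective (B : Matrix m n ℤ_[p]) (hc : 0 < c)
    (h : ∀ (s : Fin k → m) (t : Fin k → n), Function.Injective t →
      ‖(B.submatrix s t).det‖₊ < c) :
    minorNorm B k < c := by
  refine (Finset.sup_lt_iff hc).mpr fun ⟨s, t⟩ _ => ?_
  by_cases ht : Function.Injective t
  · exact h s t ht
  · simpa [Matrix.det_submatrix_eq_zero_of_not_injective B s ht] using hc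

lemma minorNorm_mul_le_right [DecidableEq m] (M : Matrix l m ℤ_[p]) (B : Matrix m n ℤ_[p])
    (k : ℕ) :
    minorNorm (M * B) k ≤ minorNorm B k := by
  refine minorNorm_le _ fun s t => ?_
  rw [Matrix.det_submatrix_mul_eq_sum]
  refine IsUltrametricDist.nnnorm_sum_le_of_forall_le fun g _ => ?_
  rw [nnnorm_mul]
  exact mul_le_of_le_one_of_le (PadicInt.nnnorm_le_one _)
    (nnnorm_det_submatrix_le_minorNorm B g t)

lemma minorNorm_transpose_le (B : Matrix m n ℤ_[p]) (k : ℕ) :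
    minorNorm Bᵀ k ≤ minorNorm B k :=
  minorNorm_le _ fun s t => by
    rw [← transpose_submatrix, det_transpose]
    exact nnnorm_det_submatrix_le_minorNorm B t s

lemma minorNorm_transpose (B : Matrix m n ℤ_[p]) (k : ℕ) :
    minorNorm Bᵀ k = minorNorm B k :=
  le_antisymm (minorNorm_transpose_le B k) (by simpa using minorNorm_transpose_le Bᵀ k)

lemma minorNorm_mul_le_left [DecidableEq n] (B : Matrix m n ℤ_[p]) (M : Matrix n l ℤ_[p])
    (k : ℕ) :
    minorNorm (B * M) k ≤ minorNorm B k := by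
  rw [← minorNorm_transpose, Matrix.transpose_mul, ← minorNorm_transpose B]
  exact minorNorm_mul_le_right _ _ k

lemma minorNorm_units_mul_units [DecidableEq m] [DecidableEq n] (U : (Matrix m m ℤ_[p])ˣ)
    (B : Matrix m n ℤ_[p]) (V : (Matrix n n ℤ_[p])ˣ) (k : ℕ) :
    minorNorm (U.val * B * V.val) k = minorNorm B k := by
  refine le_antisymm ((minorNorm_mul_le_left _ _ k).trans (minorNorm_mul_le_right _ _ k)) ?_
  calc minorNorm B k = minorNorm (U⁻¹.val * (U.val * B * V.val) * V⁻¹.val) k := by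
        rw [← Matrix.mul_assoc, ← Matrix.mul_assoc, U.inv_mul, Matrix.one_mul, Matrix.mul_assoc,
          V.mul_inv, Matrix.mul_one]
    _ ≤ minorNorm (U.val * B * V.val) k :=
        (minorNorm_mul_le_left _ _ k).trans (minorNorm_mul_le_right _ _ k)

end MinorNorm

section Tail

variable {N : ℕ}

/-- Indices are `0`-based: `tailSet N m = {m, …, N - 1}`, so the paper's `j ≥ r` reads
`r - 1 ≤ j` here. -/
def tailSet (N m : ℕ) : Finset (Fin N) := univ.filter fun j => m ≤ (j : ℕ)

def tailProd (w : Fin N → ℝ≥0) (m : ℕ) : ℝ≥0 := ∏ j ∈ tailSet N m, w j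

@[simp]
lemma mem_tailSet {m : ℕ} {j : Fin N} : j ∈ tailSet N m ↔ m ≤ (j : ℕ) := by
  simp [tailSet]

def tailEmb (m : ℕ) (i : Fin (N - m)) : Fin N := ⟨m + i, by omega⟩

lemma tailEmb_injective (m : ℕ) : Function.Injective (tailEmb (N := N) m) := by
  intro a b hab
  simpa [tailEmb, Fin.ext_iff] using hab

lemma le_tailEmb (m : ℕ) (i : Fin (N - m)) : m ≤ (tailEmb m i : ℕ) :=
  Nat.le_add_right m i

lemma image_tailEmb (m : ℕ) : univ.image (tailEmb (N := N) m) = tailSet N m := by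
  ext j
  simp only [mem_image, mem_univ, true_and, tailSet, mem_filter, tailEmb, Fin.ext_iff]
  exact ⟨fun ⟨i, hi⟩ => hi ▸ Nat.le_add_right m i,
    fun h => ⟨⟨j - m, by omega⟩, by simp; omega⟩⟩

lemma card_tailSet (N m : ℕ) : (tailSet N m).card = N - m := by
  rw [← image_tailEmb, card_image_of_injective _ (tailEmb_injective m), card_univ,
    Fintype.card_fin]

lemma prod_tailEmb (w : Fin N → ℝ≥0) (m : ℕ) : ∏ i, w (tailEmb m i) = tailProd w m := by
  rw [tailProd, ← image_tailEmb, prod_image fun a _ b _ h => tailEmb_injective m h]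

lemma tailProd_eq_mul (w : Fin N → ℝ≥0) (j : Fin N) :
    tailProd w j = w j * tailProd w (j + 1) := by
  have h : tailSet N j = insert j (tailSet N (j + 1)) := by
    ext i
    simp only [tailSet, mem_insert, mem_filter, mem_univ, true_and, Fin.ext_iff]
    omega
  rw [tailProd, h, prod_insert (by simp), tailProd]

lemma tailProd_eq_one_of_le (w : Fin N → ℝ≥0) {m : ℕ} (hm : N ≤ m) :
    tailProd w m = 1 := by
  rw [tailProd, card_eq_zero.mp (show (tailSet N m).card = 0 by rw [card_tailSet]; omega),
    prod_empty]

lemma prod_le_tailProd {w : Fin N → ℝ≥0} (hw : Monotone w) {S : Finset (Fin N)} {m : ℕ}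
    (hS : S.card = N - m) : ∏ x ∈ S, w x ≤ tailProd w m := by
  induction S using Finset.induction_on_min generalizing m with
  | empty => rw [tailProd_eq_one_of_le w (by simp at hS; omega), prod_empty]
  | insert a S ha ih =>
    have haS : a ∉ S := fun h => lt_irrefl a (ha a h)
    rw [card_insert_of_notMem haS] at hS
    have ham : (a : ℕ) ≤ m := by
      have : insert a S ⊆ tailSet N a := fun x hx => by
        rcases mem_insert.mp hx with rfl | hx
        · simp
        · simpa using (ha x hx).le
      have := card_le_card this
      rw [card_tailSet, card_insert_of_notMem haS] at this
      omega
    rw [prod_insert haS, tailProd_eq_mul w ⟨m, by omega⟩]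
    exact mul_le_mul' (hw ham) (ih (by simp; omega))

lemma prod_lt_tailProd {w : Fin N → ℝ≥0} (hw : Monotone w) {S : Finset (Fin N)} {j : Fin N}
    (hS : S.card = N - j) {a : Fin N} (ha : a ∈ S) (haj : w a < w j)
    (hpos : 0 < tailProd w (j + 1)) : ∏ x ∈ S, w x < tailProd w j := by
  rw [← mul_prod_erase S w ha, tailProd_eq_mul]
  calc w a * ∏ x ∈ S.erase a, w x ≤ w a * tailProd w (j + 1) :=
        mul_le_mul' le_rfl (prod_le_tailProd hw (by rw [card_erase_of_mem ha, hS]; omega))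
    _ < w j * tailProd w (j + 1) := mul_lt_mul_of_pos_right haj hpos

end Tail

lemma Matrix.det_submatrix_diagonal_mul_mul_diagonal {R : Type*} [CommRing R] {m n : Type*}
    [Fintype m] [Fintype n] [DecidableEq m] [DecidableEq n] {k : ℕ} (a : m → R) (b : n → R)
    (X : Matrix m n R) (s : Fin k → m) (t : Fin k → n) :
    ((diagonal a * X * diagonal b).submatrix s t).det
      = (∏ i, a (s i)) * (X.submatrix s t).det * ∏ i, b (t i) := by
  have h : (diagonal a * X * diagonal b).submatrix s t
      = diagonal (a ∘ s) * X.submatrix s t * diagonal (b ∘ t) := by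
    ext i j
    simp [diagonal_mul, mul_diagonal]
  rw [h, det_mul, det_mul, det_diagonal, det_diagonal]
  rfl

section Sandwich

open Matrix

variable {p : ℕ} [Fact p.Prime] {N : ℕ}

lemma nnnorm_det_submatrix_snDiag_mul_mul (lam mu : Fin N → WithTop ℕ)
    (A : Matrix (Fin N) (Fin N) ℤ_[p]) {k : ℕ} (s t : Fin k → Fin N) :
    ‖((snDiag p N lam * A * snDiag p N mu).submatrix s t).det‖₊
      = (∏ i, ‖zppow p (lam (s i))‖₊) * ‖(A.submatrix s t).det‖₊
          * ∏ i, ‖zppow p (mu (t i))‖₊ := by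
  rw [snDiag, snDiag, Matrix.det_submatrix_diagonal_mul_mul_diagonal, nnnorm_mul, nnnorm_mul,
    nnnorm_prod, nnnorm_prod]

lemma snDiag_zero : snDiag p N 0 = 1 := by
  simp [snDiag, zppow_zero]

lemma minorNorm_snDiag_mul_mul_le (lam : Fin N → WithTop ℕ) (A : Matrix (Fin N) (Fin N) ℤ_[p])
    {mu : Fin N → WithTop ℕ} (hmu : Antitone mu) (m : ℕ) :
    minorNorm (snDiag p N lam * A * snDiag p N mu) (N - m)
      ≤ tailProd (fun j => ‖zppow p (mu j)‖₊) m := by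
  refine minorNorm_le_of_injective _ fun s t ht => ?_
  rw [nnnorm_det_submatrix_snDiag_mul_mul]
  calc _ ≤ 1 * 1 * ∏ i, ‖zppow p (mu (t i))‖₊ := by
        gcongr
        · exact prod_le_one' fun i _ => nnnorm_zppow_le_one _
        · exact PadicInt.nnnorm_le_one _
    _ = ∏ j ∈ univ.image t, ‖zppow p (mu j)‖₊ := by
        rw [one_mul, one_mul, prod_image fun a _ b _ h => ht h]
    _ ≤ _ := prod_le_tailProd (antitone_nnnorm_zppow.comp hmu)
        (by rw [card_image_of_injective _ ht, card_univ, Fintype.card_fin])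

lemma minorNorm_snDiag {ν : Fin N → WithTop ℕ} (hν : Antitone ν) (m : ℕ) :
    minorNorm (snDiag p N ν) (N - m) = tailProd (fun j => ‖zppow p (ν j)‖₊) m := by
  have hle := minorNorm_snDiag_mul_mul_le (p := p) 0 1 hν m
  rw [snDiag_zero, Matrix.one_mul, Matrix.one_mul] at hle
  refine le_antisymm hle ?_
  calc tailProd (fun j => ‖zppow p (ν j)‖₊) m
      = ‖((snDiag p N ν).submatrix (tailEmb m) (tailEmb m)).det‖₊ := by
        rw [snDiag, Matrix.submatrix_diagonal _ _ (tailEmb_injective m), Matrix.det_diagonal,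
          nnnorm_prod, ← prod_tailEmb]
        rfl
    _ ≤ _ := nnnorm_det_submatrix_le_minorNorm _ _ _

lemma minorNorm_eq_tailProd_of_isSN {B : Matrix (Fin N) (Fin N) ℤ_[p]}
    {ν : Fin N → WithTop ℕ} (h : IsSN p N B ν) (m : ℕ) :
    minorNorm B (N - m) = tailProd (fun j => ‖zppow p (ν j)‖₊) m := by
  obtain ⟨hν, U, V, rfl⟩ := h
  rw [minorNorm_units_mul_units, minorNorm_snDiag hν]

lemma tailProd_eq_zero_iff {x : Fin N → WithTop ℕ} (hx : Antitone x) (j : Fin N) :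
    tailProd (fun i => ‖zppow p (x i)‖₊) j = 0 ↔ x j = ⊤ := by
  simp only [tailProd, prod_eq_zero_iff, mem_tailSet]
  refine ⟨fun ⟨i, hji, hi⟩ => ?_, fun h => ⟨j, le_rfl, by rw [h, nnnorm_zppow_top]⟩⟩
  rw [← nnnorm_zppow_top (p := p), strictAnti_nnnorm_zppow.injective.eq_iff] at hi
  exact top_le_iff.mp (hi ▸ hx (Fin.le_def.mpr hji))

lemma eq_of_tailProd_eq {x y : Fin N → WithTop ℕ} (hx : Antitone x) (hy : Antitone y)
    (j : Fin N)
    (hj : tailProd (fun i => ‖zppow p (x i)‖₊) j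
      = tailProd (fun i => ‖zppow p (y i)‖₊) j)
    (hj' : tailProd (fun i => ‖zppow p (x i)‖₊) (j + 1)
      = tailProd (fun i => ‖zppow p (y i)‖₊) (j + 1)) :
    x j = y j := by
  by_cases hxj : x j = ⊤
  · rw [hxj, eq_comm, ← tailProd_eq_zero_iff (p := p) hy, ← hj, tailProd_eq_zero_iff hx]
    exact hxj
  · have hne := (tailProd_eq_zero_iff (p := p) hx j).not.mpr hxj
    rw [tailProd_eq_mul, tailProd_eq_mul, hj'] at hj
    rw [tailProd_eq_mul, hj'] at hne
    exact strictAnti_nnnorm_zppow.injective (mul_right_cancel₀ (right_ne_zero_of_mul hne) hj)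

end Sandwich

section ResidueField

variable {K : Type*} [Field K]

lemma Matrix.exists_submatrix_det_ne_zero {ι : Type*} [Fintype ι] [DecidableEq ι] {k : ℕ}
    (M : Matrix ι (Fin k) K) (hM : LinearIndependent K M.col) :
    ∃ s : Fin k → ι, (M.submatrix s id).det ≠ 0 := by
  obtain ⟨g, hg⟩ := M.mulVecLin.exists_leftInverse_of_injective
    (LinearMap.ker_eq_bot.mpr (Matrix.mulVec_injective_iff.mpr hM))
  have hgM : LinearMap.toMatrix' g * M = 1 := by
    simpa [LinearMap.toMatrix'_comp, ← Matrix.toLin'_apply'] using congrArg LinearMap.toMatrix' hg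
  have h1 : ((LinearMap.toMatrix' g * M).submatrix id id).det ≠ 0 := by simp [hgM]
  rw [Matrix.det_submatrix_mul_eq_sum] at h1
  obtain ⟨s, -, hs⟩ := exists_ne_zero_of_sum_ne_zero h1
  exact ⟨s, right_ne_zero_of_mul hs⟩

lemma Matrix.det_submatrix_eq_zero_of_not_linearIndependent {ι κ : Type*} [Fintype κ]
    [DecidableEq κ] {k : ℕ} (M : Matrix ι κ K) (hM : ¬ LinearIndependent K M.col)
    (s : Fin k → ι) (e : Fin k ≃ κ) : (M.submatrix s e).det = 0 := by
  by_contra h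
  have hsub : LinearIndependent K (M.submatrix s e).col :=
    Matrix.linearIndependent_cols_iff_isUnit.mpr
      ((Matrix.isUnit_iff_isUnit_det _).mpr (isUnit_iff_ne_zero.mpr h))
  exact hM ((linearIndependent_equiv e).mp (hsub.of_comp (LinearMap.funLeft K K s)))

end ResidueField

section Estimates

variable {p : ℕ} [Fact p.Prime] {N : ℕ} {lam mu : Fin N → WithTop ℕ}
  {A : Matrix (Fin N) (Fin N) ℤ_[p]} {P : Fin N → Prop}

lemma tailProd_le_minorNorm_of_linearIndependent (hP : ∀ i, P i → lam i = 0) (m : ℕ)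
    (hA : LinearIndependent (ZMod p) fun (j : Fin (N - m)) (i : {i // P i}) =>
      PadicInt.toZMod (A i (tailEmb m j))) :
    tailProd (fun j => ‖zppow p (mu j)‖₊) m
      ≤ minorNorm (snDiag p N lam * A * snDiag p N mu) (N - m) := by
  classical
  obtain ⟨s, hs⟩ := Matrix.exists_submatrix_det_ne_zero
    (Matrix.of fun (i : {i // P i}) j => PadicInt.toZMod (A i (tailEmb m j))) hA
  have hdet : ‖(A.submatrix (fun i => (s i).1) (tailEmb m)).det‖₊ = 1 := by
    refine le_antisymm (PadicInt.nnnorm_le_one _) (not_lt.mp fun h => hs ?_)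
    rwa [PadicInt.nnnorm_lt_one_iff_toZMod_eq_zero, RingHom.map_det] at h
  calc tailProd (fun j => ‖zppow p (mu j)‖₊) m
      = ‖((snDiag p N lam * A * snDiag p N mu).submatrix (fun i => (s i).1)
          (tailEmb m)).det‖₊ := by
        rw [nnnorm_det_submatrix_snDiag_mul_mul, hdet, mul_one,
          prod_eq_one fun i _ => by rw [hP _ (s i).2, zppow_zero, nnnorm_one], one_mul,
          ← prod_tailEmb]
    _ ≤ _ := nnnorm_det_submatrix_le_minorNorm _ _ _

lemma prod_nnnorm_zppow_lt_one {ι : Type*} [Fintype ι] {x : ι → WithTop ℕ} {i : ι}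
    (hi : x i ≠ 0) : ∏ j, ‖zppow p (x j)‖₊ < 1 := by
  classical
  rw [← mul_prod_erase univ _ (mem_univ i)]
  exact mul_lt_one_of_nonneg_of_lt_one_left zero_le (nnnorm_zppow_lt_one_iff.mpr hi)
    (prod_le_one' fun j _ => nnnorm_zppow_le_one _)

lemma nnnorm_det_submatrix_lt_one_of_not_linearIndependent {m : Fin N}
    (hA : ¬ LinearIndependent (ZMod p) fun (j : {j : Fin N // m ≤ j}) (i : {i // P i}) =>
      PadicInt.toZMod (A i j))
    {s t : Fin (N - m) → Fin N} (hs : ∀ i, P (s i)) (ht : Function.Injective t)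
    (htm : ∀ i, m ≤ t i) : ‖(A.submatrix s t).det‖₊ < 1 := by
  classical
  have hbij : Function.Bijective fun i => (⟨t i, htm i⟩ : {j : Fin N // m ≤ j}) := by
    refine (Fintype.bijective_iff_injective_and_card _).mpr
      ⟨fun a b h => ht (congrArg Subtype.val h), ?_⟩
    rw [Fintype.card_fin, Fintype.card_subtype, ← card_tailSet N m]
    rfl
  rw [PadicInt.nnnorm_lt_one_iff_toZMod_eq_zero, RingHom.map_det]
  exact Matrix.det_submatrix_eq_zero_of_not_linearIndependent
    (Matrix.of fun (i : {i // P i}) (j : {j : Fin N // m ≤ j}) => PadicInt.toZMod (A i j)) hA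
    (fun i => ⟨s i, hs i⟩) (Equiv.ofBijective _ hbij)

lemma minorNorm_lt_tailProd_of_not_linearIndependent (hP₀ : ∀ i, P i → lam i = 0)
    (hP₁ : ∀ i, ¬ P i → lam i ≠ 0) (hmu : Antitone mu) (m : Fin N) (hfin : mu m ≠ ⊤)
    (hgap : ∀ j, j < m → mu m < mu j)
    (hA : ¬ LinearIndependent (ZMod p) fun (j : {j : Fin N // m ≤ j}) (i : {i // P i}) =>
      PadicInt.toZMod (A i j)) :
    minorNorm (snDiag p N lam * A * snDiag p N mu) (N - m)
      < tailProd (fun j => ‖zppow p (mu j)‖₊) m := by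
  have hw : Monotone fun j => ‖zppow p (mu j)‖₊ := antitone_nnnorm_zppow.comp hmu
  have hpos : ∀ m' : ℕ, m ≤ m' → 0 < tailProd (fun j => ‖zppow p (mu j)‖₊) m' :=
    fun m' hm' => prod_pos fun j hj => nnnorm_zppow_pos_iff.mpr <|
      ne_top_of_le_ne_top hfin (hmu (Fin.le_def.mpr ((mem_tailSet.mp hj).trans' hm')))
  refine minorNorm_lt_of_injective _ (hpos m le_rfl) fun s t ht => ?_
  have hcard : (univ.image t).card = N - m := by
    rw [card_image_of_injective _ ht, card_univ, Fintype.card_fin]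
  rw [nnnorm_det_submatrix_snDiag_mul_mul,
    ← prod_image (f := fun j => ‖zppow p (mu j)‖₊) fun a _ b _ h => ht h]
  by_cases hcols : ∀ i, m ≤ t i
  · have himage : univ.image t = tailSet N m :=
      eq_of_subset_of_card_le (fun j hj => by
        obtain ⟨i, -, rfl⟩ := mem_image.mp hj
        exact mem_tailSet.mpr (hcols i)) (by rw [hcard, card_tailSet])
    have hrows_lt : (∏ i, ‖zppow p (lam (s i))‖₊) * ‖(A.submatrix s t).det‖₊ < 1 := by
      by_cases hrows : ∀ i, P (s i)
      · rw [prod_eq_one fun i _ => by rw [hP₀ _ (hrows i), zppow_zero, nnnorm_one], one_mul]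
        exact nnnorm_det_submatrix_lt_one_of_not_linearIndependent hA hrows ht hcols
      · obtain ⟨i, hi⟩ := not_forall.mp hrows
        exact mul_lt_one_of_nonneg_of_lt_one_left zero_le
          (prod_nnnorm_zppow_lt_one (hP₁ _ hi)) (PadicInt.nnnorm_le_one _)
    rw [himage]
    exact mul_lt_of_lt_one_left (hpos m le_rfl) hrows_lt
  · obtain ⟨i, hi⟩ := not_forall.mp hcols
    have hcol_lt := prod_lt_tailProd hw hcard (mem_image_of_mem t (mem_univ i))
      (strictAnti_nnnorm_zppow (hgap _ (not_le.mp hi))) (hpos _ (Nat.le_succ m))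
    calc _ ≤ 1 * 1 * ∏ j ∈ univ.image t, ‖zppow p (mu j)‖₊ := by
          gcongr
          · exact prod_le_one' fun i _ => nnnorm_zppow_le_one _
          · exact PadicInt.nnnorm_le_one _
      _ < _ := by rwa [one_mul, one_mul]

lemma tailProd_eq_of_linearIndependent {ν : Fin N → WithTop ℕ}
    (hν : IsSN p N (snDiag p N lam * A * snDiag p N mu) ν) (hP : ∀ i, P i → lam i = 0)
    (hmu : Antitone mu) (m : ℕ)
    (hA : LinearIndependent (ZMod p) fun (j : Fin (N - m)) (i : {i // P i}) =>
      PadicInt.toZMod (A i (tailEmb m j))) :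
    tailProd (fun j => ‖zppow p (ν j)‖₊) m
      = tailProd (fun j => ‖zppow p (mu j)‖₊) m := by
  rw [← minorNorm_eq_tailProd_of_isSN hν]
  exact le_antisymm (minorNorm_snDiag_mul_mul_le lam A hmu m)
    (tailProd_le_minorNorm_of_linearIndependent hP m hA)

lemma linearIndependent_of_eq_on_tail {ν : Fin N → WithTop ℕ}
    (hν : IsSN p N (snDiag p N lam * A * snDiag p N mu) ν) (hP₀ : ∀ i, P i → lam i = 0)
    (hP₁ : ∀ i, ¬ P i → lam i ≠ 0) (hmu : Antitone mu) (m : Fin N) (hfin : mu m ≠ ⊤)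
    (hgap : ∀ j, j < m → mu m < mu j) (hνμ : ∀ j, m ≤ j → ν j = mu j) :
    LinearIndependent (ZMod p) fun (j : {j : Fin N // m ≤ j}) (i : {i // P i}) =>
      PadicInt.toZMod (A i j) := by
  by_contra hA
  refine (minorNorm_lt_tailProd_of_not_linearIndependent hP₀ hP₁ hmu m hfin hgap hA).ne ?_
  rw [minorNorm_eq_tailProd_of_isSN hν]
  refine prod_congr rfl fun j hj => ?_
  dsimp only
  rw [hνμ j (Fin.le_def.mpr (mem_tailSet.mp hj))]

end Estimates

lemma Fin.lt_card_filter_iff_of_antitone {N : ℕ} {Q : Fin N → Prop} [DecidablePred Q]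
    (hQ : Antitone Q) (i : Fin N) : (i : ℕ) < (univ.filter Q).card ↔ Q i := by
  constructor
  · intro h
    by_contra hi
    have hsub : univ.filter Q ⊆ Iio i := fun j hj =>
      mem_Iio.mpr (lt_of_not_ge fun hij => hi (hQ hij (mem_filter.mp hj).2))
    have := card_le_card hsub
    rw [Fin.card_Iio] at this
    omega
  · intro hi
    have hsub : Iic i ⊆ univ.filter Q := fun j hj =>
      mem_filter.mpr ⟨mem_univ _, hQ (mem_Iic.mp hj) hi⟩
    have := card_le_card hsub
    rw [Fin.card_Iic] at this
    omega

lemma card_filter_one_le_le_iff {N : ℕ} {lam : Fin N → WithTop ℕ} (hlam : Antitone lam)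
    (i : Fin N) : (univ.filter fun i => 1 ≤ lam i).card ≤ i ↔ lam i = 0 := by
  rw [← not_lt, Fin.lt_card_filter_iff_of_antitone fun i j hij h => h.trans (hlam hij), not_le]
  exact Order.lt_one_iff (α := ℕ∞)

theorem statement13 (p : ℕ) [Fact p.Prime] (N : ℕ)
    (A : Matrix (Fin N) (Fin N) ℤ_[p])
    (lam mu : Fin N → WithTop ℕ) (hlam : Antitone lam) (hmu : Antitone mu)
    (ν : Fin N → WithTop ℕ)
    (hν : IsSN p N (snDiag p N lam * A * snDiag p N mu) ν)
    (r : ℕ) (hr1 : 1 ≤ r) (hrN : r ≤ N)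
    (L : ℕ) (hL : L = (Finset.univ.filter fun i : Fin N => 1 ≤ lam i).card)
    (v : {j : Fin N // r ≤ (j : ℕ) + 1} → {i : Fin N // L ≤ (i : ℕ)} → ZMod p)
    (hv : v = fun j i => PadicInt.toZMod (A i.val j.val)) :
    (LinearIndependent (ZMod p) v →
      ∀ j : Fin N, r ≤ (j : ℕ) + 1 → ν j = mu j)
    ∧
    (((r = 1 ∧ mu ⟨0, by omega⟩ < ⊤) ∨ (2 ≤ r ∧ mu ⟨r - 1, by omega⟩ < mu ⟨r - 2, by omega⟩)) →
      (∀ j : Fin N, r ≤ (j : ℕ) + 1 → ν j = mu j) →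
      LinearIndependent (ZMod p) v) := by
  subst hv hL
  have hrows := card_filter_one_le_le_iff hlam
  refine ⟨fun hLI => ?_, fun hgap hνμ => ?_⟩
  · have htail : ∀ m, r - 1 ≤ m → tailProd (fun j => ‖zppow p (ν j)‖₊) m
        = tailProd (fun j => ‖zppow p (mu j)‖₊) m := fun m hm =>
      tailProd_eq_of_linearIndependent hν (fun i => (hrows i).mp) hmu m
        (hLI.comp (fun j => ⟨tailEmb m j, by have := le_tailEmb m j; omega⟩)
          fun a b h => tailEmb_injective m (congrArg Subtype.val h))
    exact fun j hj => eq_of_tailProd_eq hν.1 hmu j (htail j (by omega)) (htail (j + 1) (by omega))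
  · set m : Fin N := ⟨r - 1, by omega⟩
    have hfin : mu m ≠ ⊤ := by
      rcases hgap with ⟨rfl, h⟩ | ⟨-, h⟩ <;> exact ne_top_of_lt h
    have hgap' : ∀ j, j < m → mu m < mu j := fun j hj => by
      replace hj : (j : ℕ) < r - 1 := hj
      rcases hgap with ⟨rfl, -⟩ | ⟨-, h⟩
      · exact absurd hj (Nat.not_lt_zero _)
      · exact h.trans_le (hmu (Fin.le_def.mpr (by simp only; omega)))
    refine (linearIndependent_equiv (Equiv.subtypeEquivRight fun j => ?_)).mpr
      (linearIndependent_of_eq_on_tail hν (fun i => (hrows i).mp) (fun i hi => mt (hrows i).mpr hi)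
        hmu m hfin hgap' fun j hj => hνμ j (by have : r - 1 ≤ (j : ℕ) := hj; omega))
    show r ≤ (j : ℕ) + 1 ↔ r - 1 ≤ (j : ℕ)
    omega
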